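/- Let Ψ be a non-linear branching mechanism of finite variation type with Ψ′(0+) := lim_{λ→0+} Ψ(λ)/λ ∈ (−∞,0) and with Ψ(λ) ≤ 0 for every λ ≥ 0 (i.e. γ = sup{λ : Ψ(λ) ≤ 0} = ∞). Let u be a flow for Ψ. Then for every θ > 0, lim_{t→∞} e^{Ψ′(0+)·t} u(t,θ) = 0. -/

import Mathlib

open MeasureTheory Set Filter Topology
open scoped ENNReal NNReal

/-- The Lévy–Khintchine shape of a branching mechanism:
`Ψ(λ) = αλ + βλ² + ∫_{(0,∞)} (e^{−λr} − 1 + λr·1_{r<1}) π(dr)`. -/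
noncomputable def psiShape (a b : ℝ) (piM : Measure ℝ) (l : ℝ) : ℝ :=
  a * l + b * l ^ 2 +
    ∫ r, (Real.exp (-l * r) - 1 + (if r < 1 then l * r else 0)) ∂piM

/-- `Ψ` is a branching mechanism with parameters `a = α`, `b = β` and Lévy measure `piM = π`:
`β ≥ 0`, `π` is carried by `(0,∞)`, `∫ (1 ∧ r²) π(dr) < ∞`, and `Ψ` has the
Lévy–Khintchine form on `[0,∞)`. -/
def IsBranchingMechanism (Ψ : ℝ → ℝ) (a b : ℝ) (piM : Measure ℝ) : Prop :=
  0 ≤ b ∧ piM (Set.Ioi (0:ℝ))ᶜ = 0 ∧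
    (∫⁻ r, ENNReal.ofReal (min 1 (r ^ 2)) ∂piM) < ⊤ ∧
    ∀ l, 0 ≤ l → Ψ l = psiShape a b piM l

/-- Non-linearity of the branching mechanism: `β > 0` or `π ≠ 0`. -/
def IsNonLinear (b : ℝ) (piM : Measure ℝ) : Prop := 0 < b ∨ piM ≠ 0

/-- Finite variation type: `β = 0` and `∫_{(0,1)} r π(dr) < ∞`. -/
def FiniteVariationType (b : ℝ) (piM : Measure ℝ) : Prop :=
  b = 0 ∧ (∫⁻ r in Set.Ioo (0:ℝ) 1, ENNReal.ofReal r ∂piM) < ⊤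

/-- The drift constant `D = α + ∫_{(0,1)} r π(dr)` (finite variation cases). -/
noncomputable def Dconst (a : ℝ) (piM : Measure ℝ) : ℝ :=
  a + ∫ r in Set.Ioo (0:ℝ) 1, r ∂piM

/-- `u` is a flow for `Ψ`: for every `λ > 0`, `u(0,λ) = λ`, `u(t,λ) > 0` and
`∂_t u(t,λ) = −Ψ(u(t,λ))` on `[0,∞)`. -/
def IsFlow (Ψ : ℝ → ℝ) (u : ℝ → ℝ → ℝ) : Prop :=
  (∀ l, 0 < l → u 0 l = l) ∧
  (∀ l, 0 < l → ∀ t, 0 ≤ t → 0 < u t l) ∧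
  (∀ l, 0 < l → ∀ t, 0 ≤ t →
    HasDerivWithinAt (fun s => u s l) (-(Ψ (u t l))) (Set.Ici 0) t)

/-! Since `Ψ ≤ 0`, the trajectory `t ↦ u(t,θ)` is nondecreasing, so `u(t,θ) ≥ θ`. For a non-linear
mechanism `λ ↦ Ψ(λ)/λ` is strictly increasing on `(0,∞)` (each chord slope `λ ↦ (e^{-λr} - 1)/λ`
is, by strict convexity of `λ ↦ e^{-λr}`), so along the trajectory
`Ψ(u)/u ≥ κ := Ψ(θ)/θ > Ψ'(0+) = c`. Hence `e^{κt} u(t,θ)` is nonincreasing, and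
`e^{ct} u(t,θ) ≤ θ e^{-(κ-c)t} → 0`. -/

open Real

noncomputable def psiIntegrand (l r : ℝ) : ℝ :=
  exp (-l * r) - 1 + if r < 1 then l * r else 0

theorem strictConvexOn_exp_neg_mul {r : ℝ} (hr : r ≠ 0) :
    StrictConvexOn ℝ univ fun l => exp (-l * r) := by
  refine ⟨convex_univ, fun x _ y _ hxy s t hs ht hst => ?_⟩
  have hne : -x * r ≠ -y * r := by simpa [hr] using hxy
  convert strictConvexOn_exp.2 (mem_univ _) (mem_univ _) hne hs ht hst using 2
  simp only [smul_eq_mul]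
  ring

theorem exp_neg_mul_sub_one_div_lt {r x y : ℝ} (hr : r ≠ 0) (hx : 0 < x) (hxy : x < y) :
    (exp (-x * r) - 1) / x < (exp (-y * r) - 1) / y := by
  simpa using (strictConvexOn_exp_neg_mul hr).secant_strict_mono (mem_univ 0) (mem_univ x)
    (mem_univ y) hx.ne' (hx.trans hxy).ne' hxy

theorem psiIntegrand_div_eq {l : ℝ} (hl : l ≠ 0) (r : ℝ) :
    psiIntegrand l r / l = (exp (-l * r) - 1) / l + if r < 1 then r else 0 := by
  unfold psiIntegrand
  split_ifs
  · field_simp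
  · simp

theorem psiIntegrand_div_lt_div {r x y : ℝ} (hr : r ≠ 0) (hx : 0 < x) (hxy : x < y) :
    psiIntegrand x r / x < psiIntegrand y r / y := by
  rw [psiIntegrand_div_eq hx.ne', psiIntegrand_div_eq (hx.trans hxy).ne']
  exact add_lt_add_left (exp_neg_mul_sub_one_div_lt hr hx hxy) _

theorem abs_psiIntegrand_le {l r : ℝ} (hl : 0 ≤ l) (hr : 0 < r) :
    |psiIntegrand l r| ≤ (1 + l ^ 2) * min 1 (r ^ 2) := by
  have hlr : 0 ≤ l * r := mul_nonneg hl hr.le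
  have hexp_le : exp (-l * r) ≤ 1 := exp_le_one_iff.2 (by linarith)
  have hexp_ge : 1 - l * r ≤ exp (-l * r) := by simpa using one_sub_le_exp_neg (l * r)
  rcases le_or_gt 1 r with h1 | h1
  · rw [psiIntegrand, if_neg h1.not_gt, add_zero, min_eq_left (one_le_pow₀ h1), mul_one,
      abs_le]
    constructor <;> nlinarith [exp_pos (-l * r)]
  · rw [psiIntegrand, if_pos h1, min_eq_right (by nlinarith), abs_of_nonneg (by linarith)]
    -- for `lr ≤ 1` this is Taylor's bound, beyond that `e^{-lr} ≤ 1`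
    have hquad : exp (-l * r) - 1 + l * r ≤ (l * r) ^ 2 := by
      rcases le_or_gt (l * r) 1 with h2 | h2
      · have h := abs_exp_sub_one_sub_id_le (x := -(l * r)) (by rwa [abs_neg, abs_of_nonneg hlr])
        rw [neg_mul]
        linarith [le_abs_self (exp (-(l * r)) - 1 - -(l * r)), neg_sq (l * r)]
      · nlinarith
    nlinarith [sq_nonneg l, mul_pos hr hr]

theorem integrable_psiIntegrand {piM : Measure ℝ} (hcar : piM (Ioi (0 : ℝ))ᶜ = 0)
    (hint : (∫⁻ r, ENNReal.ofReal (min 1 (r ^ 2)) ∂piM) < ⊤) {l : ℝ} (hl : 0 ≤ l) :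
    Integrable (psiIntegrand l) piM := by
  have hmin : Integrable (fun r : ℝ => min 1 (r ^ 2)) piM :=
    (lintegral_ofReal_ne_top_iff_integrable (by fun_prop)
      (Eventually.of_forall fun r => by positivity)).1 hint.ne
  refine (hmin.const_mul (1 + l ^ 2)).mono' ?_ ?_
  · unfold psiIntegrand
    exact (Measurable.add (by fun_prop) (Measurable.ite measurableSet_Iio (by fun_prop)
      measurable_const)).aestronglyMeasurable
  · filter_upwards [mem_ae_iff.2 hcar] with r hr
    exact abs_psiIntegrand_le hl hr

theorem psiShape_div_eq (a b : ℝ) (piM : Measure ℝ) {l : ℝ} (hl : l ≠ 0) :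
    psiShape a b piM l / l = a + b * l + ∫ r, psiIntegrand l r / l ∂piM := by
  change (a * l + b * l ^ 2 + ∫ r, psiIntegrand l r ∂piM) / l = _
  rw [integral_div]
  field_simp

section LevyMeasure

variable {piM : Measure ℝ} (hcar : piM (Ioi (0 : ℝ))ᶜ = 0)
  (hint : (∫⁻ r, ENNReal.ofReal (min 1 (r ^ 2)) ∂piM) < ⊤)
include hcar hint

theorem integral_psiIntegrand_div_le {x y : ℝ} (hx : 0 < x) (hxy : x < y) :
    ∫ r, psiIntegrand x r / x ∂piM ≤ ∫ r, psiIntegrand y r / y ∂piM := by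
  refine integral_mono_ae ((integrable_psiIntegrand hcar hint hx.le).div_const x)
    ((integrable_psiIntegrand hcar hint (hx.trans hxy).le).div_const y) ?_
  filter_upwards [mem_ae_iff.2 hcar] with r hr
  exact (psiIntegrand_div_lt_div (ne_of_gt hr) hx hxy).le

theorem integral_psiIntegrand_div_lt (hpi : piM ≠ 0) {x y : ℝ} (hx : 0 < x) (hxy : x < y) :
    ∫ r, psiIntegrand x r / x ∂piM < ∫ r, psiIntegrand y r / y ∂piM := by
  have hix := (integrable_psiIntegrand hcar hint hx.le).div_const x
  have hiy := (integrable_psiIntegrand hcar hint (hx.trans hxy).le).div_const y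
  have hgap : ∀ r, 0 < r → 0 < psiIntegrand y r / y - psiIntegrand x r / x := fun r hr =>
    sub_pos.2 (psiIntegrand_div_lt_div hr.ne' hx hxy)
  have hIoi : 0 < piM (Ioi 0) := by
    rw [pos_iff_ne_zero, measure_congr (ae_eq_univ.2 hcar)]
    exact Measure.measure_univ_ne_zero.2 hpi
  have hpos : 0 < ∫ r, (psiIntegrand y r / y - psiIntegrand x r / x) ∂piM := by
    rw [integral_pos_iff_support_of_nonneg_ae
      (f := fun r => psiIntegrand y r / y - psiIntegrand x r / x) _ (hiy.sub hix)]
    · exact hIoi.trans_le (measure_mono fun r hr => (hgap r hr).ne')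
    · filter_upwards [mem_ae_iff.2 hcar] with r hr using (hgap r hr).le
  rw [integral_sub hiy hix] at hpos
  linarith

end LevyMeasure

theorem IsBranchingMechanism.strictMonoOn_div {Ψ : ℝ → ℝ} {a b : ℝ} {piM : Measure ℝ}
    (hbm : IsBranchingMechanism Ψ a b piM) (hnl : IsNonLinear b piM) :
    StrictMonoOn (fun l => Ψ l / l) (Ioi 0) := by
  intro x (hx : 0 < x) y (hy : 0 < y) hxy
  obtain ⟨hb, hcar, hint, hΨ⟩ := hbm
  simp only [hΨ x hx.le, hΨ y hy.le, psiShape_div_eq a b piM hx.ne',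
    psiShape_div_eq a b piM hy.ne']
  have hbxy : b * x ≤ b * y := mul_le_mul_of_nonneg_left hxy.le hb
  rcases hnl with hb' | hpi
  · linarith [mul_lt_mul_of_pos_left hxy hb', integral_psiIntegrand_div_le hcar hint hx hxy]
  · linarith [integral_psiIntegrand_div_lt hcar hint hpi hx hxy]

theorem StrictMonoOn.lt_of_tendsto_nhdsGT {f : ℝ → ℝ} {a c x : ℝ} (hf : StrictMonoOn f (Ioi a))
    (hc : Tendsto f (𝓝[>] a) (𝓝 c)) (hx : a < x) : c < f x := by
  have hm : a < (a + x) / 2 := by linarith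
  have hc_le : c ≤ f ((a + x) / 2) := by
    refine le_of_tendsto hc ?_
    filter_upwards [Ioo_mem_nhdsGT hm] with s hs
    exact (hf hs.1 hm hs.2).le
  exact hc_le.trans_lt (hf hm hx (by linarith))

theorem monotoneOn_Ici_of_hasDerivWithinAt_nonneg {f f' : ℝ → ℝ} {a : ℝ}
    (hf : ∀ t ∈ Ici a, HasDerivWithinAt f (f' t) (Ici a) t) (hf' : ∀ t ∈ Ici a, 0 ≤ f' t) :
    MonotoneOn f (Ici a) :=
  monotoneOn_of_hasDerivWithinAt_nonneg (convex_Ici a) (fun t ht => (hf t ht).continuousWithinAt)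
    (fun t ht => by
      rw [interior_Ici] at ht ⊢
      exact (hf t (Ioi_subset_Ici_self ht)).mono Ioi_subset_Ici_self)
    (fun t ht => hf' t (interior_subset ht))

theorem antitoneOn_Ici_of_hasDerivWithinAt_nonpos {f f' : ℝ → ℝ} {a : ℝ}
    (hf : ∀ t ∈ Ici a, HasDerivWithinAt f (f' t) (Ici a) t) (hf' : ∀ t ∈ Ici a, f' t ≤ 0) :
    AntitoneOn f (Ici a) := by
  simpa using (monotoneOn_Ici_of_hasDerivWithinAt_nonneg (fun t ht => (hf t ht).neg)
    (fun t ht => neg_nonneg.2 (hf' t ht))).neg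

namespace IsFlow

variable {Ψ : ℝ → ℝ} {u : ℝ → ℝ → ℝ} {θ : ℝ}

theorem monotoneOn (hu : IsFlow Ψ u) (hΨ : ∀ l, 0 < l → Ψ l ≤ 0) (hθ : 0 < θ) :
    MonotoneOn (fun t => u t θ) (Ici 0) :=
  monotoneOn_Ici_of_hasDerivWithinAt_nonneg (hu.2.2 θ hθ)
    fun t ht => neg_nonneg.2 (hΨ _ (hu.2.1 θ hθ t ht))

theorem le_apply (hu : IsFlow Ψ u) (hΨ : ∀ l, 0 < l → Ψ l ≤ 0) (hθ : 0 < θ) {t : ℝ}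
    (ht : 0 ≤ t) : θ ≤ u t θ := by
  simpa [hu.1 θ hθ] using hu.monotoneOn hΨ hθ self_mem_Ici ht ht

theorem exp_mul_apply_le (hu : IsFlow Ψ u) (hθ : 0 < θ) {κ : ℝ}
    (hκ : ∀ t, 0 ≤ t → κ * u t θ ≤ Ψ (u t θ)) {t : ℝ} (ht : 0 ≤ t) :
    exp (κ * t) * u t θ ≤ θ := by
  have hanti : AntitoneOn (fun s => exp (κ * s) * u s θ) (Ici 0) := by
    refine antitoneOn_Ici_of_hasDerivWithinAt_nonpos
      (f' := fun s => exp (κ * s) * κ * u s θ + exp (κ * s) * -Ψ (u s θ))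
      (fun s hs => ?_) (fun s hs => ?_)
    · have hexp : HasDerivAt (fun s => exp (κ * s)) (exp (κ * s) * κ) s := by
        simpa using ((hasDerivAt_id s).const_mul κ).exp
      exact hexp.hasDerivWithinAt.mul (hu.2.2 θ hθ s hs)
    · nlinarith [exp_pos (κ * s), hκ s hs]
  simpa [hu.1 θ hθ] using hanti self_mem_Ici ht ht

end IsFlow

theorem csbp_grey_drift_vanishes_gamma_infinite_general
    (Ψ : ℝ → ℝ) (a b : ℝ) (piM : Measure ℝ)
    (hbm : IsBranchingMechanism Ψ a b piM) (hnl : IsNonLinear b piM)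
    (c : ℝ) (hder : Tendsto (fun l => Ψ l / l) (𝓝[>] 0) (𝓝 c))
    (hΨneg : ∀ l : ℝ, 0 ≤ l → Ψ l ≤ 0)
    (u : ℝ → ℝ → ℝ) (hu : IsFlow Ψ u) :
    ∀ θ : ℝ, 0 < θ →
      Tendsto (fun t => Real.exp (c * t) * u t θ) atTop (𝓝 0) := by
  intro θ hθ
  have hΨ : ∀ l, 0 < l → Ψ l ≤ 0 := fun l hl => hΨneg l hl.le
  have hmono := hbm.strictMonoOn_div hnl
  set κ := Ψ θ / θ
  have hcκ : c < κ := hmono.lt_of_tendsto_nhdsGT hder hθ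
  have hκ : ∀ t, 0 ≤ t → κ * u t θ ≤ Ψ (u t θ) := fun t ht => by
    have hθu := hu.le_apply hΨ hθ ht
    have hpos := hθ.trans_le hθu
    exact (le_div_iff₀ hpos).1 (hmono.monotoneOn hθ hpos hθu)
  have hbound : ∀ t, 0 ≤ t → exp (c * t) * u t θ ≤ θ * exp ((c - κ) * t) := fun t ht =>
    calc exp (c * t) * u t θ = exp ((c - κ) * t) * (exp (κ * t) * u t θ) := by
          rw [← mul_assoc, ← exp_add]; ring_nf
      _ ≤ exp ((c - κ) * t) * θ :=
          mul_le_mul_of_nonneg_left (hu.exp_mul_apply_le hθ hκ ht) (exp_pos _).le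
      _ = θ * exp ((c - κ) * t) := mul_comm _ _
  have hdecay : Tendsto (fun t => θ * exp ((c - κ) * t)) atTop (𝓝 0) := by
    simpa using (tendsto_exp_atBot.comp
      (tendsto_id.const_mul_atTop_of_neg (sub_neg.2 hcκ))).const_mul θ
  refine tendsto_of_tendsto_of_tendsto_of_le_of_le' tendsto_const_nhds hdecay ?_ ?_
  · filter_upwards [eventually_ge_atTop 0] with t ht
    exact mul_nonneg (exp_pos _).le (hu.2.1 θ hθ t ht).le
  · filter_upwards [eventually_ge_atTop 0] with t ht using hbound t ht

/-- let `Ψ` be a non-linear branching mechanism of finite variation type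
with `Ψ′(0+) = c ∈ (−∞,0)` and `Ψ(λ) ≤ 0` for all `λ ≥ 0` (i.e. `γ = ∞`), and let `u`
be a flow for `Ψ`. Then for every `θ > 0`, `e^{Ψ′(0+)·t} u(t,θ) → 0` as `t → ∞`. -/
theorem csbp_grey_drift_vanishes_gamma_infinite
    (Ψ : ℝ → ℝ) (a b : ℝ) (piM : Measure ℝ)
    (hbm : IsBranchingMechanism Ψ a b piM) (hnl : IsNonLinear b piM)
    (hfv : FiniteVariationType b piM)
    (c : ℝ) (hc : c < 0) (hder : Tendsto (fun l => Ψ l / l) (𝓝[>] 0) (𝓝 c))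
    (hΨneg : ∀ l : ℝ, 0 ≤ l → Ψ l ≤ 0)
    (u : ℝ → ℝ → ℝ) (hu : IsFlow Ψ u) :
    ∀ θ : ℝ, 0 < θ →
      Tendsto (fun t => Real.exp (c * t) * u t θ) atTop (𝓝 0) :=
  csbp_grey_drift_vanishes_gamma_infinite_general Ψ a b piM hbm hnl c hder hΨneg u hu
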